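/- For every n ≥ 2 and all f₁,…,fₙ ∈ A, one has fₙ·d(f_{n−1}·d(⋯ f₂·d(f₁) ⋯)) = Σ_{φ ∈ Leib(n−1)} fₙ · ∏_{j=1}^{n−1} d^{|φ⁻¹(j)|}(f_j), where |φ⁻¹(j)| is the cardinality of the fiber of φ over j and d^m is the m-th iterate of d. -/
import Mathlib


/-- The nested expression `g₁·d(g₂·d(⋯ g_{h−1}·d(g_h) ⋯))` attached to a list
`[g₁, …, g_h]` (equal to `1` on the empty list, and to `g₁` on a singleton). -/
def nest {A : Type*} [CommRing A] (d : A → A) : List A → A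
  | [] => 1
  | [x] => x
  | x :: y :: l => x * d (nest d (y :: l))

section Helpers
variable {A : Type*} [CommRing A] {d : A → A}

lemma d_sum' (hadd : ∀ x y : A, d (x + y) = d x + d y) {ι : Type*} (s : Finset ι) (g : ι → A) :
    d (∑ i ∈ s, g i) = ∑ i ∈ s, d (g i) :=
  map_sum (AddMonoidHom.mk' d hadd) g s

lemma d_one' (hleib : ∀ x y : A, d (x * y) = d x * y + x * d y) : d 1 = 0 := by
  have h := hleib 1 1
  simp only [mul_one, one_mul] at h
  exact (left_eq_add.mp h)

lemma d_prod' (hleib : ∀ x y : A, d (x * y) = d x * y + x * d y)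
    {ι : Type*} [DecidableEq ι] (s : Finset ι) (g : ι → A) :
    d (∏ i ∈ s, g i) = ∑ i ∈ s, (∏ j ∈ s.erase i, g j) * d (g i) := by
  induction s using Finset.induction_on with
  | empty => simpa using d_one' hleib
  | @insert a s ha ih =>
    rw [Finset.prod_insert ha, hleib, ih, Finset.sum_insert ha, Finset.erase_insert ha,
      Finset.mul_sum]
    have key : (∑ i ∈ s, (∏ j ∈ (insert a s).erase i, g j) * d (g i)) =
        ∑ i ∈ s, g a * ((∏ j ∈ s.erase i, g j) * d (g i)) :=
      Finset.sum_congr rfl fun i hi => by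
        rw [Finset.erase_insert_of_ne (fun h : a = i => ha (h ▸ hi)),
          Finset.prod_insert (fun h => ha (Finset.mem_of_mem_erase h))]
        ring
    rw [key]
    ring

lemma nest_cons (d : A → A) (x : A) : ∀ l : List A, l ≠ [] → nest d (x :: l) = x * d (nest d l)
  | [], h => absurd rfl h
  | _ :: _, _ => rfl

lemma ofFn_reverse_succ {n : ℕ} (f : Fin (n + 1) → A) :
    (List.ofFn f).reverse = f (Fin.last n) :: (List.ofFn fun i : Fin n => f i.castSucc).reverse := by
  rw [List.ofFn_succ', List.concat_eq_append, List.reverse_concat]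

end Helpers

def extφ {m : ℕ} (φ : Fin m → Fin m) (v : Fin (m + 1)) : Fin (m + 1) → Fin (m + 1) :=
  Fin.lastCases v (fun i => (φ i).castSucc)

@[simp] lemma extφ_last {m : ℕ} (φ : Fin m → Fin m) (v : Fin (m + 1)) :
    extφ φ v (Fin.last m) = v := Fin.lastCases_last

@[simp] lemma extφ_castSucc {m : ℕ} (φ : Fin m → Fin m) (v : Fin (m + 1)) (i : Fin m) :
    extφ φ v i.castSucc = (φ i).castSucc := Fin.lastCases_castSucc i

def resφ {m : ℕ} (φ' : Fin (m + 1) → Fin (m + 1)) (k : Fin m) : Fin m :=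
  ⟨min (φ' k.castSucc : ℕ) k, lt_of_le_of_lt (min_le_right _ _) k.isLt⟩

lemma resφ_castSucc {m : ℕ} (φ' : Fin (m + 1) → Fin (m + 1)) (k : Fin m)
    (h : φ' k.castSucc ≤ k.castSucc) : (resφ φ' k).castSucc = φ' k.castSucc := by
  have : (φ' k.castSucc : ℕ) ≤ (k : ℕ) := h
  simp [resφ, Fin.ext_iff, Nat.min_eq_left this]

lemma card_fiber_castSucc {m : ℕ} (φ : Fin m → Fin m) (v : Fin (m + 1)) (j : Fin m) :
    (Finset.univ.filter fun k => extφ φ v k = j.castSucc).card =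
      (Finset.univ.filter fun k => φ k = j).card + (if v = j.castSucc then 1 else 0) := by
  rw [Finset.card_filter, Finset.card_filter, Fin.sum_univ_castSucc]
  simp [Fin.castSucc_inj]

lemma card_fiber_last {m : ℕ} (φ : Fin m → Fin m) (v : Fin (m + 1)) :
    (Finset.univ.filter fun k => extφ φ v k = Fin.last m).card =
      if v = Fin.last m then 1 else 0 := by
  rw [Finset.card_filter, Fin.sum_univ_castSucc]
  simp [(Fin.castSucc_lt_last _).ne]

/-- for `n = m + 1 ≥ 2` and `f₁,…,fₙ` (given by `f : Fin (m+1) → A`, so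
`f_j = f (j−1)`), `fₙ·d(f_{n−1}·d(⋯ f₂·d(f₁)⋯)) = Σ_{φ ∈ Leib(n−1)} fₙ·∏_{j=1}^{n−1} d^{|φ⁻¹(j)|}(f_j)`,
where `Leib(m)` is the set of maps `φ : {1,…,m} → {1,…,m}` with `φ(k) ≤ k`,
modelled on `Fin m → Fin m`. -/
theorem reversed_nest_eq_sum_leib {A : Type*} [CommRing A] (d : A → A)
    (hadd : ∀ x y : A, d (x + y) = d x + d y)
    (hleib : ∀ x y : A, d (x * y) = d x * y + x * d y)
    (m : ℕ) (hm : 1 ≤ m) (f : Fin (m + 1) → A) :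
    nest d (List.ofFn f).reverse =
      ∑ φ ∈ Finset.univ.filter (fun φ : Fin m → Fin m => ∀ k, φ k ≤ k),
        f (Fin.last m) *
          ∏ j : Fin m,
            d^[(Finset.univ.filter (fun k => φ k = j)).card] (f j.castSucc) := by
  induction m, hm using Nat.le_induction with
  | base =>
    have h1 : (List.ofFn f).reverse = [f 1, f 0] := by
      simp [List.ofFn_succ]
    rw [h1, show nest d [f 1, f 0] = f 1 * d (f 0) from rfl]
    rw [show (Finset.univ.filter fun φ : Fin 1 → Fin 1 => ∀ k, φ k ≤ k) = {fun _ => 0} from by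
      decide]
    rw [Finset.sum_singleton, Fin.prod_univ_one]
    norm_num
    rfl
  | succ m hm ih =>
    classical
    have hne : (List.ofFn fun i : Fin (m+1) => f i.castSucc).reverse ≠ [] := by simp
    rw [ofFn_reverse_succ f, nest_cons d _ _ hne, ih (fun i => f i.castSucc),
      d_sum' hadd, Finset.mul_sum]
    -- turn RHS into a double sum over (φ, v)
    have hbij :
        (∑ φ ∈ Finset.univ.filter (fun φ : Fin (m+1) → Fin (m+1) => ∀ k, φ k ≤ k),
          f (Fin.last (m+1)) *
            ∏ j : Fin (m+1),
              d^[(Finset.univ.filter (fun k => φ k = j)).card] (f j.castSucc)) =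
        ∑ p ∈ (Finset.univ.filter (fun φ : Fin m → Fin m => ∀ k, φ k ≤ k)) ×ˢ
            (Finset.univ : Finset (Fin (m+1))),
          f (Fin.last (m+1)) *
            ∏ j : Fin (m+1),
              d^[(Finset.univ.filter (fun k => extφ p.1 p.2 k = j)).card] (f j.castSucc) := by
      refine Finset.sum_nbij' (fun φ' => (resφ φ', φ' (Fin.last m)))
        (fun p => extφ p.1 p.2) ?_ ?_ ?_ ?_ ?_
      · intro φ' hφ'
        simp only [Finset.mem_filter, Finset.mem_univ, true_and] at hφ'
        simp only [Finset.mem_product, Finset.mem_filter, Finset.mem_univ, true_and]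
        exact ⟨fun k => Fin.mk_le_of_le_val (min_le_right _ _), trivial⟩
      · intro p hp
        simp only [Finset.mem_product, Finset.mem_filter, Finset.mem_univ, true_and] at hp
        simp only [Finset.mem_filter, Finset.mem_univ, true_and]
        intro k
        induction k using Fin.lastCases with
        | last => simp [Fin.le_last]
        | cast i => simpa [Fin.castSucc_le_castSucc_iff] using hp.1 i
      · intro φ' hφ'
        simp only [Finset.mem_filter, Finset.mem_univ, true_and] at hφ'
        dsimp only
        funext k
        induction k using Fin.lastCases with
        | last => simp
        | cast i => rw [extφ_castSucc, resφ_castSucc _ _ (hφ' i.castSucc)]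
      · intro p hp
        simp only [Finset.mem_product, Finset.mem_filter, Finset.mem_univ, true_and] at hp
        have h2 : ∀ k : Fin m, extφ p.1 p.2 k.castSucc ≤ k.castSucc := fun k => by
          rw [extφ_castSucc]
          simpa [Fin.castSucc_le_castSucc_iff] using hp.1 k
        have hfst : resφ (extφ p.1 p.2) = p.1 := by
          funext k
          have := resφ_castSucc (extφ p.1 p.2) k (h2 k)
          rw [extφ_castSucc] at this
          exact Fin.castSucc_injective _ this
        rw [hfst, extφ_last]
      · intro φ' hφ'
        simp only [Finset.mem_filter, Finset.mem_univ, true_and] at hφ'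
        have hext : extφ (resφ φ') (φ' (Fin.last m)) = φ' := by
          funext k
          induction k using Fin.lastCases with
          | last => simp
          | cast i => rw [extφ_castSucc, resφ_castSucc _ _ (hφ' i.castSucc)]
        dsimp only
        rw [hext]
    rw [hbij, Finset.sum_product]
    refine Finset.sum_congr rfl fun φ hφ => ?_
    simp only [Finset.mem_filter, Finset.mem_univ, true_and] at hφ
    rw [Fin.sum_univ_castSucc (f := fun v => f (Fin.last (m+1)) *
      ∏ j : Fin (m+1), d^[(Finset.univ.filter fun k => extφ φ v k = j).card] (f j.castSucc))]
    have hlastterm :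
        (∏ j : Fin (m+1), d^[(Finset.univ.filter fun k => extφ φ (Fin.last m) k = j).card] (f j.castSucc)) =
        (∏ j : Fin m, d^[(Finset.univ.filter fun k => φ k = j).card] (f j.castSucc.castSucc)) *
          d (f (Fin.last m).castSucc) := by
      rw [Fin.prod_univ_castSucc]
      congr 1
      · exact Finset.prod_congr rfl fun j _ => by
          rw [card_fiber_castSucc, if_neg (Fin.castSucc_lt_last j).ne', add_zero]
      · rw [card_fiber_last, if_pos rfl, Function.iterate_one]
    have hiterm : ∀ i : Fin m,
        (∏ j : Fin (m+1), d^[(Finset.univ.filter fun k => extφ φ i.castSucc k = j).card] (f j.castSucc)) =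
        ((∏ j ∈ Finset.univ.erase i, d^[(Finset.univ.filter fun k => φ k = j).card] (f j.castSucc.castSucc)) *
          d (d^[(Finset.univ.filter fun k => φ k = i).card] (f i.castSucc.castSucc))) *
          f (Fin.last m).castSucc := by
      intro i
      rw [Fin.prod_univ_castSucc]
      congr 1
      · have step : ∀ j : Fin m,
            d^[(Finset.univ.filter fun k => extφ φ i.castSucc k = j.castSucc).card] (f j.castSucc.castSucc) =
            d^[(Finset.univ.filter fun k => φ k = j).card + (if i = j then 1 else 0)] (f j.castSucc.castSucc) := by
          intro j
          rw [card_fiber_castSucc]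
          simp only [Fin.castSucc_inj]
        rw [Finset.prod_congr rfl fun j _ => step j,
          ← Finset.mul_prod_erase Finset.univ
            (fun j => d^[(Finset.univ.filter fun k => φ k = j).card + (if i = j then 1 else 0)] (f j.castSucc.castSucc))
            (Finset.mem_univ i)]
        rw [if_pos rfl, Function.iterate_succ_apply', mul_comm]
        congr 1
        exact Finset.prod_congr rfl fun j hj => by
          rw [if_neg (Ne.symm (Finset.mem_erase.mp hj).1), add_zero]
      · rw [card_fiber_last, if_neg (Fin.castSucc_lt_last i).ne, Function.iterate_zero_apply]
    have hR : (∑ i : Fin m, f (Fin.last (m+1)) *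
          ∏ j : Fin (m+1), d^[(Finset.univ.filter fun k => extφ φ i.castSucc k = j).card] (f j.castSucc)) =
        ∑ i : Fin m, f (Fin.last (m+1)) *
          (((∏ j ∈ Finset.univ.erase i, d^[(Finset.univ.filter fun k => φ k = j).card] (f j.castSucc.castSucc)) *
            d (d^[(Finset.univ.filter fun k => φ k = i).card] (f i.castSucc.castSucc))) *
            f (Fin.last m).castSucc) :=
      Finset.sum_congr rfl fun i _ => by rw [hiterm i]
    rw [hR, hlastterm, hleib, d_prod' hleib, mul_add, add_comm]
    congr 1
    · rw [← mul_assoc, Finset.mul_sum]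
      exact Finset.sum_congr rfl fun i _ => by ring
    · ring
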